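/- arXiv:1510.00860 — 5 statements merged into one kernel-verified Lean document; each statement's English description precedes it below -/
import Mathlib

section
/- Let B : Z^2 × Z^2 → R satisfy additivity and ω(x) = min(B(x, x+e1), B(x, x+e2)) for all x ∈ Z^2. Suppose an up-right path x_m, ..., x_n follows minimal gradients of B and breaks ties with e2-steps: for each m ≤ k < n, either ω(x_k) = B(x_k, x_{k+1}) < max(B(x_k, x_k+e1), B(x_k, x_k+e2)), or x_{k+1} = x_k + e2 and B(x_k, x_k+e1) = B(x_k, x_k+e2). Then x_{m,n} is the leftmost geodesic from x_m to x_n: for any other up-right path x'_{m,n} from x_m to x_n with sum of ω along it equal to G(x_m, x_n), we have x_k · e1 ≤ x'_k · e1 for all m ≤ k ≤ n. -/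
open Filter Topology MeasureTheory ProbabilityTheory

/-- Lattice points of `ℤ²`. -/
abbrev Pt : Type := ℤ × ℤ

/-- The step `e₁ = (1,0)`. -/
def pe1 : Pt := (1, 0)

/-- The step `e₂ = (0,1)`. -/
def pe2 : Pt := (0, 1)

/-- `x` is an up-right path on the index range `[m, n]`. -/
def IsUpRight (x : ℕ → Pt) (m n : ℕ) : Prop :=
  ∀ k, m ≤ k → k < n → x (k + 1) = x k + pe1 ∨ x (k + 1) = x k + pe2

/-- The weight collected by the path `x` over indices `m ≤ k < n`
(the endpoint's weight is not counted). -/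
def pathSum (ω : Pt → ℝ) (x : ℕ → Pt) (m n : ℕ) : ℝ :=
  ∑ k ∈ Finset.Ico m n, ω (x k)

/-- Last-passage time from `u` to `v`: the maximal weight over up-right paths. -/
noncomputable def lppG (ω : Pt → ℝ) (u v : Pt) : ℝ :=
  sSup {s : ℝ | ∃ (n : ℕ) (x : ℕ → Pt),
    IsUpRight x 0 n ∧ x 0 = u ∧ x n = v ∧ s = pathSum ω x 0 n}

/-- Extended-real last-passage time; equals `⊥ = -∞` when no up-right path
from `u` to `v` exists. -/
noncomputable def lppGE (ω : Pt → ℝ) (u v : Pt) : EReal :=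
  sSup {s : EReal | ∃ (n : ℕ) (x : ℕ → Pt),
    IsUpRight x 0 n ∧ x 0 = u ∧ x n = v ∧ s = ((pathSum ω x 0 n : ℝ) : EReal)}

/-- Additivity of a cocycle: `B(x,y) + B(y,z) = B(x,z)`. -/
def IsCocycle (B : Pt → Pt → ℝ) : Prop := ∀ x y z : Pt, B x y + B y z = B x z

/-- `B` recovers the weights `ω`. -/
def Recovers (B : Pt → Pt → ℝ) (ω : Pt → ℝ) : Prop :=
  ∀ x : Pt, ω x = min (B x (x + pe1)) (B x (x + pe2))

-- shifted path
lemma upright_shift (x : ℕ → Pt) (m n : ℕ) (h : IsUpRight x m n) :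
    IsUpRight (fun k => x (m + k)) 0 (n - m) := by
  intro k _ hk
  have hk' : m + k < n := by omega
  have := h (m + k) (Nat.le_add_right m k) hk'
  simpa [Nat.add_assoc] using this

lemma sum_shift (ω : Pt → ℝ) (x : ℕ → Pt) (m n : ℕ) (hmn : m ≤ n) :
    pathSum ω (fun k => x (m + k)) 0 (n - m) = pathSum ω x m n := by
  unfold pathSum
  conv_rhs => rw [Finset.sum_Ico_eq_sum_range]
  rw [Finset.range_eq_Ico]

lemma telescopeB (B : Pt → Pt → ℝ) (hadd : IsCocycle B) (y : ℕ → Pt) (m : ℕ) :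
    ∀ n, m ≤ n → ∑ k ∈ Finset.Ico m n, B (y k) (y (k + 1)) = B (y m) (y n) := by
  intro n hn
  induction n, hn using Nat.le_induction with
  | base =>
    have := hadd (y m) (y m) (y m)
    simp only [Finset.Ico_self, Finset.sum_empty]
    linarith
  | succ n hn ih =>
    rw [Finset.sum_Ico_succ_top hn, ih]
    exact hadd (y m) (y n) (y (n + 1))

lemma step_le (B : Pt → Pt → ℝ) (ω : Pt → ℝ) (hrec : Recovers B ω)
    (y : ℕ → Pt) (m n : ℕ) (hy : IsUpRight y m n) :
    ∀ k, m ≤ k → k < n → ω (y k) ≤ B (y k) (y (k + 1)) := by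
  intro k hk hkn
  rcases hy k hk hkn with h | h
  · rw [h, hrec]; exact min_le_left _ _
  · rw [h, hrec]; exact min_le_right _ _

lemma pathSum_le_B (B : Pt → Pt → ℝ) (ω : Pt → ℝ) (hadd : IsCocycle B)
    (hrec : Recovers B ω) (y : ℕ → Pt) (m n : ℕ) (hmn : m ≤ n)
    (hy : IsUpRight y m n) : pathSum ω y m n ≤ B (y m) (y n) := by
  rw [← telescopeB B hadd y m n hmn]
  exact Finset.sum_le_sum fun k hk => by
    rw [Finset.mem_Ico] at hk
    exact step_le B ω hrec y m n hy k hk.1 hk.2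

lemma ub (B : Pt → Pt → ℝ) (ω : Pt → ℝ) (hadd : IsCocycle B)
    (hrec : Recovers B ω) (u v : Pt) :
    ∀ s ∈ {s : ℝ | ∃ (n : ℕ) (x : ℕ → Pt),
      IsUpRight x 0 n ∧ x 0 = u ∧ x n = v ∧ s = pathSum ω x 0 n}, s ≤ B u v := by
  rintro s ⟨N, y, hy, hy0, hyN, rfl⟩
  calc pathSum ω y 0 N ≤ B (y 0) (y N) :=
        pathSum_le_B B ω hadd hrec y 0 N (Nat.zero_le N) hy
    _ = B u v := by rw [hy0, hyN]

lemma coordSum (x : ℕ → Pt) (m n : ℕ) (hpath : IsUpRight x m n) :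
    ∀ k, m ≤ k → k ≤ n → (x k).1 + (x k).2 = (x m).1 + (x m).2 + ((k : ℤ) - m) := by
  intro k hk
  induction k, hk using Nat.le_induction with
  | base => intro _; simp
  | succ k hk ih =>
    intro hk1
    have hkle : k ≤ n := by omega
    have hIH := ih hkle
    rcases hpath k hk (by omega) with h | h <;>
      · rw [h]
        simp only [Prod.fst_add, Prod.snd_add, pe1, pe2]
        push_cast
        linarith

lemma mono_fst (x : ℕ → Pt) (m n : ℕ) (hpath : IsUpRight x m n)
    (k : ℕ) (hk : m ≤ k) (hkn : k < n) : (x k).1 ≤ (x (k + 1)).1 := by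
  rcases hpath k hk hkn with h | h <;>
    · rw [h]; simp [pe1, pe2]

/-- following minimal gradients of `B` and breaking ties with `e₂`-steps
produces the leftmost geodesic between its endpoints. -/
theorem minimal_gradient_e2_ties_is_leftmost_geodesic
    (B : Pt → Pt → ℝ) (ω : Pt → ℝ)
    (hadd : IsCocycle B) (hrec : Recovers B ω)
    (x : ℕ → Pt) (m n : ℕ) (hmn : m ≤ n) (hpath : IsUpRight x m n)
    (hstep : ∀ k, m ≤ k → k < n →
      (ω (x k) = B (x k) (x (k + 1)) ∧
        B (x k) (x (k + 1)) < max (B (x k) (x k + pe1)) (B (x k) (x k + pe2))) ∨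
      (x (k + 1) = x k + pe2 ∧ B (x k) (x k + pe1) = B (x k) (x k + pe2))) :
    ∀ x' : ℕ → Pt, IsUpRight x' m n → x' m = x m → x' n = x n →
      pathSum ω x' m n = lppG ω (x m) (x n) →
      ∀ k, m ≤ k → k ≤ n → (x k).1 ≤ (x' k).1 := by
  -- ω equals the B-gradient along x
  have hωx : ∀ k, m ≤ k → k < n → ω (x k) = B (x k) (x (k + 1)) := by
    intro k hk hkn
    rcases hstep k hk hkn with ⟨h1, _⟩ | ⟨h1, h2⟩
    · exact h1
    · rw [h1, hrec (x k), h2, min_self]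
  have hxB : pathSum ω x m n = B (x m) (x n) := by
    rw [pathSum, ← telescopeB B hadd x m n hmn]
    exact Finset.sum_congr rfl fun k hk => by
      rw [Finset.mem_Ico] at hk; exact hωx k hk.1 hk.2
  -- membership of the shifted x in the lpp set
  have hmem : pathSum ω x m n ∈ {s : ℝ | ∃ (N : ℕ) (y : ℕ → Pt),
      IsUpRight y 0 N ∧ y 0 = x m ∧ y N = x n ∧ s = pathSum ω y 0 N} := by
    refine ⟨n - m, fun k => x (m + k), upright_shift x m n hpath, by simp,
      by simp [Nat.add_sub_cancel' hmn], (sum_shift ω x m n hmn).symm⟩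
  have hG : lppG ω (x m) (x n) = B (x m) (x n) := by
    apply le_antisymm
    · exact csSup_le ⟨_, hmem⟩ (ub B ω hadd hrec (x m) (x n))
    · rw [← hxB]
      exact le_csSup ⟨B (x m) (x n), ub B ω hadd hrec (x m) (x n)⟩ hmem
  intro x' hpath' hm' hn' hsum'
  have hx'B : pathSum ω x' m n = B (x m) (x n) := hsum'.trans hG
  have htele' : ∑ k ∈ Finset.Ico m n, B (x' k) (x' (k + 1)) = B (x m) (x n) := by
    rw [telescopeB B hadd x' m n hmn, hm', hn']
  have hterm : ∀ k ∈ Finset.Ico m n, ω (x' k) = B (x' k) (x' (k + 1)) := by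
    have hle : ∀ k ∈ Finset.Ico m n, ω (x' k) ≤ B (x' k) (x' (k + 1)) := fun k hk => by
      rw [Finset.mem_Ico] at hk
      exact step_le B ω hrec x' m n hpath' k hk.1 hk.2
    have hsums : ∑ k ∈ Finset.Ico m n, ω (x' k)
        = ∑ k ∈ Finset.Ico m n, B (x' k) (x' (k + 1)) := by
      rw [← pathSum, hx'B, htele']
    intro k hk
    exact (Finset.sum_eq_sum_iff_of_le hle).1 hsums k hk
  -- the induction
  intro k hk
  induction k, hk using Nat.le_induction with
  | base => intro _; rw [hm']
  | succ k hk ih =>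
    intro hk1
    have hkn : k < n := hk1
    have hIH := ih (le_of_lt hkn)
    rcases hpath k hk hkn with he1 | he2
    · -- x takes an e1-step
      rcases lt_or_eq_of_le hIH with hlt | heq
      · have h1 : (x' k).1 ≤ (x' (k + 1)).1 := mono_fst x' m n hpath' k hk hkn
        rw [he1]; simp only [Prod.fst_add, pe1]
        omega
      · -- equal first coordinates: the points coincide
        have hc := coordSum x m n hpath k hk (le_of_lt hkn)
        have hc' := coordSum x' m n hpath' k hk (le_of_lt hkn)
        rw [hm'] at hc'
        have hxx : x k = x' k := by
          have : (x k).2 = (x' k).2 := by omega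
          exact Prod.ext heq this
        rcases hstep k hk hkn with ⟨h1, h2⟩ | ⟨h1, h2⟩
        · rw [he1] at h1 h2
          have hab : B (x k) (x k + pe1) < B (x k) (x k + pe2) := by
            rcases max_cases (B (x k) (x k + pe1)) (B (x k) (x k + pe2)) with
              ⟨hm1, _⟩ | ⟨hm1, _⟩ <;> [linarith; (rw [hm1] at h2; exact h2)]
          rcases hpath' k hk hkn with he1' | he2'
          · rw [he1, he1', ← hxx]
          · exfalso
            have ht := hterm k (Finset.mem_Ico.2 ⟨hk, hkn⟩)
            rw [he2', ← hxx, hrec (x k)] at ht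
            have := min_le_left (B (x k) (x k + pe1)) (B (x k) (x k + pe2))
            linarith
        · exfalso
          rw [he1] at h1
          have : pe1 = pe2 := by exact add_left_cancel h1
          simp [pe1, pe2] at this
    · -- x takes an e2-step
      have h1 : (x' k).1 ≤ (x' (k + 1)).1 := mono_fst x' m n hpath' k hk hkn
      rw [he2]; simp only [Prod.fst_add, pe2]
      omega
end

section
/- Let B : Z^2 × Z^2 → R satisfy additivity and weight recovery ω(x) = min(B(x, x+e1), B(x, x+e2)) for all x. Then for all x ≤ y in Z^2, the last-passage time satisfies G(x,y) ≤ B(x,y). -/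
open Filter Topology MeasureTheory ProbabilityTheory

lemma pathSum_le (B : Pt → Pt → ℝ) (ω : Pt → ℝ)
    (hadd : IsCocycle B) (hrec : Recovers B ω) :
    ∀ (n : ℕ) (x : ℕ → Pt), IsUpRight x 0 n → pathSum ω x 0 n ≤ B (x 0) (x n) := by
  intro n
  induction n with
  | zero =>
    intro x _
    have h0 : B (x 0) (x 0) = 0 := by have := hadd (x 0) (x 0) (x 0); linarith
    simp [pathSum, h0]
  | succ n ih =>
    intro x hx
    have hx' : IsUpRight x 0 n := fun k hk hk' => hx k hk (hk'.trans (Nat.lt_succ_self n))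
    have h1 : pathSum ω x 0 (n + 1) = pathSum ω x 0 n + ω (x n) := by
      simpa [pathSum] using Finset.sum_Ico_succ_top (Nat.zero_le n) (fun k => ω (x k))
    have h2 : ω (x n) ≤ B (x n) (x (n + 1)) := by
      rcases hx n (Nat.zero_le n) (Nat.lt_succ_self n) with h | h
      · rw [h, hrec (x n)]; exact min_le_left _ _
      · rw [h, hrec (x n)]; exact min_le_right _ _
    have h3 := hadd (x 0) (x n) (x (n + 1))
    have := ih x hx'
    linarith

/-- For an additive weight-recovering `B`, the last-passage time is
dominated by the cocycle: `G(x,y) ≤ B(x,y)` for all `x ≤ y`. -/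
theorem lpp_le_cocycle (B : Pt → Pt → ℝ) (ω : Pt → ℝ)
    (hadd : IsCocycle B) (hrec : Recovers B ω) :
    ∀ x y : Pt, x ≤ y → lppG ω x y ≤ B x y := by
  intro x y hxy
  set a : ℕ := (y.1 - x.1).toNat with ha
  set b : ℕ := (y.2 - x.2).toNat with hb
  have ha' : (a : ℤ) = y.1 - x.1 := Int.toNat_of_nonneg (by have := hxy.1; simp at this ⊢; linarith)
  have hb' : (b : ℤ) = y.2 - x.2 := Int.toNat_of_nonneg (by have := hxy.2; simp at this ⊢; linarith)
  -- explicit path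
  set p : ℕ → Pt := fun k => (x.1 + min (k : ℤ) a, x.2 + ((k : ℤ) - min (k : ℤ) a)) with hp
  have hup : IsUpRight p 0 (a + b) := by
    intro k _ hk
    by_cases hka : k < a
    · left
      simp only [hp, Prod.ext_iff, pe1, Prod.fst_add, Prod.snd_add]
      push_cast
      constructor <;> omega
    · right
      simp only [hp, Prod.ext_iff, pe2, Prod.fst_add, Prod.snd_add]
      push_cast
      constructor <;> omega
  have hp0 : p 0 = x := by simp [hp]
  have hpn : p (a + b) = y := by
    have h1 : min (((a + b : ℕ) : ℤ)) a = a := min_eq_right (by push_cast; linarith [Int.ofNat_nonneg b])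
    simp only [hp, h1, Prod.ext_iff]
    push_cast
    constructor
    · linarith
    · linarith
  have hne : {s : ℝ | ∃ (n : ℕ) (z : ℕ → Pt),
      IsUpRight z 0 n ∧ z 0 = x ∧ z n = y ∧ s = pathSum ω z 0 n}.Nonempty :=
    ⟨pathSum ω p 0 (a + b), a + b, p, hup, hp0, hpn, rfl⟩
  apply csSup_le hne
  rintro s ⟨n, z, hz, hz0, hzn, rfl⟩
  have := pathSum_le B ω hadd hrec n z hz
  rwa [hz0, hzn] at this
end

section
/- Fix ω : Z^2 → R. Let u, v ∈ Z_+^2 with |u|_1 = |v|_1 ≥ 1 and u·e1 ≤ v·e1. Then G(0,u) − G(e1,u) ≥ G(0,v) − G(e1,v), where G(e1, w) is interpreted as −∞ if there is no up-right path from e1 to w (i.e., w·e1 = 0). -/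
open Filter Topology MeasureTheory ProbabilityTheory

namespace LPPaux

lemma step_fst {x : ℕ → Pt} {n k : ℕ} (h : IsUpRight x 0 n) (hk : k < n) :
    ((x (k+1)).1 = (x k).1 ∧ (x (k+1)).2 = (x k).2 + 1) ∨
    ((x (k+1)).1 = (x k).1 + 1 ∧ (x (k+1)).2 = (x k).2) := by
  rcases h k (Nat.zero_le _) hk with h' | h'
  · right; rw [h']; simp [pe1]
  · left; rw [h']; simp [pe2]

lemma level {x : ℕ → Pt} {n : ℕ} (h : IsUpRight x 0 n) :
    ∀ k, k ≤ n → (x k).1 + (x k).2 = (x 0).1 + (x 0).2 + k := by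
  intro k
  induction k with
  | zero => intro _; simp
  | succ k ih =>
    intro hk
    have hk' : k < n := hk
    have := ih (le_of_lt hk')
    rcases step_fst h hk' with ⟨h1, h2⟩ | ⟨h1, h2⟩ <;> push_cast <;> omega

lemma fst_mono {x : ℕ → Pt} {n : ℕ} (h : IsUpRight x 0 n) :
    ∀ k, k ≤ n → (x 0).1 ≤ (x k).1 := by
  intro k
  induction k with
  | zero => intro _; exact le_refl _
  | succ k ih =>
    intro hk
    have hk' : k < n := hk
    have := ih (le_of_lt hk')
    rcases step_fst h hk' with ⟨h1, h2⟩ | ⟨h1, h2⟩ <;> omega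

lemma exists_path (w z : Pt) (hwz : w ≤ z) :
    ∃ n x, IsUpRight x 0 n ∧ x 0 = w ∧ x n = z := by
  obtain ⟨h1, h2⟩ := hwz
  have ha : (((z.1 - w.1).toNat : ℕ) : ℤ) = z.1 - w.1 := Int.toNat_of_nonneg (by omega)
  have hb : (((z.2 - w.2).toNat : ℕ) : ℤ) = z.2 - w.2 := Int.toNat_of_nonneg (by omega)
  set a := (z.1 - w.1).toNat with hadef
  set b := (z.2 - w.2).toNat with hbdef
  refine ⟨a + b, fun k => if k ≤ a then (w.1 + k, w.2) else (z.1, w.2 + ((k - a : ℕ) : ℤ)), ?_, ?_, ?_⟩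
  · intro k _ hk
    by_cases hka : k + 1 ≤ a
    · left
      simp only [if_pos hka, if_pos (Nat.le_of_succ_le hka)]
      simp only [pe1, Prod.ext_iff, Prod.fst_add, Prod.snd_add]
      constructor <;> [push_cast; skip] <;> omega
    · right
      simp only [if_neg hka]
      by_cases hk2 : k ≤ a
      · simp only [if_pos hk2]
        simp only [pe2, Prod.ext_iff, Prod.fst_add, Prod.snd_add]
        constructor <;> omega
      · simp only [if_neg hk2]
        simp only [pe2, Prod.ext_iff, Prod.fst_add, Prod.snd_add]
        constructor <;> omega
  · simp
  · simp only []
    split_ifs with hab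
    · simp [Prod.ext_iff]; omega
    · simp [Prod.ext_iff]; omega

def pathOf (w : Pt) (b : ℕ → Bool) : ℕ → Pt
  | 0 => w
  | k+1 => pathOf w b k + (if b k then pe1 else pe2)

lemma lppGE_bot (ω : Pt → ℝ) {w z : Pt} (h : z.1 < w.1) : lppGE ω w z = ⊥ := by
  have he : {s : EReal | ∃ (n : ℕ) (x : ℕ → Pt),
      IsUpRight x 0 n ∧ x 0 = w ∧ x n = z ∧ s = ((pathSum ω x 0 n : ℝ) : EReal)} = ∅ := by
    ext s
    simp only [Set.mem_setOf_eq, Set.mem_empty_iff_false, iff_false, not_exists]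
    rintro n x ⟨hup, h0, hn, rfl⟩
    have := fst_mono hup n le_rfl
    rw [h0, hn] at this
    omega
  rw [lppGE, he, sSup_empty]

lemma lppGE_eq (ω : Pt → ℝ) (w z : Pt) (hwz : w ≤ z) :
    ∃ m : ℝ, lppGE ω w z = (m : EReal) ∧
      (∃ n x, IsUpRight x 0 n ∧ x 0 = w ∧ x n = z ∧ m = pathSum ω x 0 n) ∧
      (∀ n x, IsUpRight x 0 n → x 0 = w → x n = z → pathSum ω x 0 n ≤ m) := by
  classical
  set S : Set ℝ := {s | ∃ n x, IsUpRight x 0 n ∧ x 0 = w ∧ x n = z ∧ s = pathSum ω x 0 n} with hS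
  have hne : S.Nonempty := by
    obtain ⟨n, x, hx1, hx2, hx3⟩ := exists_path w z hwz
    exact ⟨_, n, x, hx1, hx2, hx3, rfl⟩
  set N : ℕ := (z.1 + z.2 - (w.1 + w.2)).toNat with hN
  have hlenn : ∀ n (x : ℕ → Pt), IsUpRight x 0 n → x 0 = w → x n = z → n = N := by
    intro n x hup h0 hn
    have := level hup n le_rfl
    rw [h0, hn] at this
    omega
  have hfin : S.Finite := by
    have hsub : S ⊆ Set.range (fun b : Fin N → Bool =>
        pathSum ω (pathOf w (fun k => if h : k < N then b ⟨k, h⟩ else true)) 0 N) := by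
      rintro s ⟨n, x, hup, h0, hn, rfl⟩
      have hnN := hlenn n x hup h0 hn
      subst hnN
      refine ⟨fun i => decide (x (i + 1) = x i + pe1), ?_⟩
      have agree : ∀ k, k ≤ N →
          pathOf w (fun j => if h : j < N then decide (x (j + 1) = x j + pe1) else true) k = x k := by
        intro k
        induction k with
        | zero => intro _; simp [pathOf, h0]
        | succ k ih =>
          intro hk
          have hk' : k < N := hk
          simp only [pathOf, ih (le_of_lt hk')]
          show x k + (if (if h : k < N then decide (x (k + 1) = x k + pe1) else true)
              then pe1 else pe2) = x (k + 1)
          rw [dif_pos hk']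
          by_cases h' : x (k + 1) = x k + pe1
          · simp [h']
          · have h2 := (hup k (Nat.zero_le _) hk').resolve_left h'
            simp [h', h2.symm]
      dsimp only
      unfold pathSum
      exact Finset.sum_congr rfl fun k hk => by
        rw [agree k (le_of_lt (Finset.mem_Ico.mp hk).2)]

    exact Set.Finite.subset (Set.finite_range _) hsub
  have hmem : sSup S ∈ S := hne.csSup_mem hfin
  have hub : ∀ n x, IsUpRight x 0 n → x 0 = w → x n = z → pathSum ω x 0 n ≤ sSup S :=
    fun n x h1 h2 h3 => le_csSup hfin.bddAbove ⟨n, x, h1, h2, h3, rfl⟩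
  refine ⟨sSup S, ?_, hmem, hub⟩
  have himg : {s : EReal | ∃ (n : ℕ) (x : ℕ → Pt),
      IsUpRight x 0 n ∧ x 0 = w ∧ x n = z ∧ s = ((pathSum ω x 0 n : ℝ) : EReal)}
      = (fun r : ℝ => (r : EReal)) '' S := by
    ext s
    constructor
    · rintro ⟨n, x, h1, h2, h3, rfl⟩; exact ⟨_, ⟨n, x, h1, h2, h3, rfl⟩, rfl⟩
    · rintro ⟨r, ⟨n, x, h1, h2, h3, rfl⟩, rfl⟩; exact ⟨n, x, h1, h2, h3, rfl⟩
  rw [lppGE, himg]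
  have hg : IsGreatest ((fun r : ℝ => (r : EReal)) '' S) ((sSup S : ℝ) : EReal) := by
    constructor
    · exact ⟨_, hmem, rfl⟩
    · rintro s ⟨r, hr, rfl⟩
      simp only [EReal.coe_le_coe_iff]
      exact le_csSup hfin.bddAbove hr
  exact hg.csSup_eq

end LPPaux


/-- monotonicity of the gradient `G(0,·) - G(e₁,·)` along an antidiagonal,
with the convention `G = -∞` (in `EReal`) when no up-right path exists. -/
theorem lpp_gradient_e1_monotone (ω : Pt → ℝ) (u v : Pt)
    (hu : 0 ≤ u) (hv : 0 ≤ v)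
    (hdiag : u.1 + u.2 = v.1 + v.2) (hlen : 1 ≤ u.1 + u.2) (h1 : u.1 ≤ v.1) :
    lppGE ω 0 v - lppGE ω pe1 v ≤ lppGE ω 0 u - lppGE ω pe1 u := by
  classical
  by_cases huv : u = v
  · subst huv; exact le_refl _
  have hu1 : (0:ℤ) ≤ u.1 := by simpa using hu.1
  have hu2 : (0:ℤ) ≤ u.2 := by simpa using hu.2
  have hv2 : (0:ℤ) ≤ v.2 := by simpa using hv.2
  by_cases hcase : u.1 = 0
  · have hb : lppGE ω pe1 u = ⊥ := LPPaux.lppGE_bot ω (by simp [pe1, hcase])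
    obtain ⟨m, hm, -, -⟩ := LPPaux.lppGE_eq ω 0 u hu
    rw [hb, hm]
    have htop : (m : EReal) - ⊥ = ⊤ := by
      rw [sub_eq_add_neg]
      simp
    rw [htop]
    exact le_top
  have hu1' : (1:ℤ) ≤ u.1 := by omega
  have hv1' : (1:ℤ) ≤ v.1 := le_trans hu1' h1
  have hpu : pe1 ≤ u := ⟨by simpa [pe1] using hu1', by simpa [pe1] using hu2⟩
  have hpv : pe1 ≤ v := ⟨by simpa [pe1] using hv1', by simpa [pe1] using hv2⟩
  obtain ⟨a, hA, -, haub⟩ := LPPaux.lppGE_eq ω 0 u hu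
  obtain ⟨b, hB, ⟨nb, x2, hx2, hx20, hx2n, hbeq⟩, -⟩ := LPPaux.lppGE_eq ω pe1 u hpu
  obtain ⟨c, hC, ⟨nc, x1, hx1, hx10, hx1n, hceq⟩, -⟩ := LPPaux.lppGE_eq ω 0 v hv
  obtain ⟨d, hD, -, hdub⟩ := LPPaux.lppGE_eq ω pe1 v hpv
  rw [hA, hB, hC, hD, ← EReal.coe_sub, ← EReal.coe_sub, EReal.coe_le_coe_iff]
  have hu1v : u.1 < v.1 := by
    rcases lt_or_eq_of_le h1 with h | h
    · exact h
    · exact absurd (Prod.ext_iff.mpr ⟨h, by omega⟩) huv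
  -- lengths
  have hNc : (nc : ℤ) = v.1 + v.2 := by
    have := LPPaux.level hx1 nc le_rfl
    rw [hx10, hx1n] at this
    simp at this
    omega
  have hNb : (nb : ℤ) + 1 = u.1 + u.2 := by
    have := LPPaux.level hx2 nb le_rfl
    rw [hx20, hx2n] at this
    simp [pe1] at this
    omega
  have hnc : nc = nb + 1 := by omega
  have lev1 : ∀ k, k ≤ nc → (x1 k).1 + (x1 k).2 = (k : ℤ) := by
    intro k hk
    have := LPPaux.level hx1 k hk
    rw [hx10] at this
    simpa using this
  have lev2 : ∀ k, k ≤ nb → (x2 k).1 + (x2 k).2 = 1 + (k : ℤ) := by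
    intro k hk
    have := LPPaux.level hx2 k hk
    rw [hx20] at this
    simp [pe1] at this
    omega
  -- find the crossing index
  have hxv : (x1 (nb + 1)).1 = v.1 := by rw [← hnc, hx1n]
  have hxu : (x2 nb).1 = u.1 := by rw [hx2n]
  have hex : ∃ k, (x2 k).1 ≤ (x1 (k + 1)).1 := ⟨nb, by omega⟩
  have hfind : ∃ k, k ≤ nb ∧ (x2 k).1 ≤ (x1 (k + 1)).1 ∧
      ∀ j, j < k → (x1 (j + 1)).1 < (x2 j).1 := by
    refine ⟨Nat.find hex, Nat.find_min' hex (by omega), Nat.find_spec hex, fun j hj => ?_⟩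
    have := Nat.find_min hex hj
    omega
  obtain ⟨k, hknb, hk0, hkpos⟩ := hfind
  have hDk : (x2 k).1 = (x1 (k + 1)).1 := by
    rcases Nat.eq_zero_or_pos k with rfl | hpos
    · have e0 : (x1 0).1 = 0 := by rw [hx10]; rfl
      have e2 : (x2 0).1 = 1 := by rw [hx20]; rfl
      rcases LPPaux.step_fst hx1 (show 0 < nc by omega) with ⟨f1, f2⟩ | ⟨f1, f2⟩ <;> omega
    · obtain ⟨j, rfl⟩ : ∃ j, k = j + 1 := ⟨k - 1, by omega⟩
      have hj2 : j < nb := by omega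
      have hj1 : j + 1 < nc := by omega
      have hprev := hkpos j (by omega)
      rcases LPPaux.step_fst hx2 hj2 with ⟨f1, f2⟩ | ⟨f1, f2⟩ <;>
        rcases LPPaux.step_fst hx1 hj1 with ⟨g1, g2⟩ | ⟨g1, g2⟩ <;> omega
  have hklt : k < nb := by
    rcases lt_or_eq_of_le hknb with h | h
    · exact h
    · rw [h] at hDk; omega
  have cross : x2 k = x1 (k + 1) := by
    have l2 := lev2 k hknb
    have l1 := lev1 (k + 1) (by omega)
    refine Prod.ext_iff.mpr ⟨hDk, ?_⟩
    push_cast at l1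
    omega
  -- the swapped paths
  set y1 : ℕ → Pt := fun j => if j ≤ k then x1 j else x2 (j - 1) with hy1
  set y2 : ℕ → Pt := fun j => if j ≤ k then x2 j else x1 (j + 1) with hy2
  have hy1up : IsUpRight y1 0 nc := by
    intro j _ hj
    simp only [hy1]
    split_ifs with h1' h2' h2'
    · exact hx1 j (Nat.zero_le _) (by omega)
    · omega
    · have hjk : j = k := by omega
      rw [show j + 1 - 1 = j from by omega, hjk, cross]
      exact hx1 k (Nat.zero_le _) (by omega)
    · rw [show j + 1 - 1 = j from by omega]
      have := hx2 (j - 1) (Nat.zero_le _) (by omega)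
      rw [show j - 1 + 1 = j from by omega] at this
      exact this
  have hy2up : IsUpRight y2 0 nb := by
    intro j _ hj
    simp only [hy2]
    split_ifs with h1' h2' h2'
    · exact hx2 j (Nat.zero_le _) (by omega)
    · omega
    · have hjk : j = k := by omega
      rw [hjk, cross]
      exact hx1 (k + 1) (Nat.zero_le _) (by omega)
    · exact hx1 (j + 1) (Nat.zero_le _) (by omega)
  have hy10 : y1 0 = 0 := by
    simp only [hy1]
    rw [if_pos (Nat.zero_le k)]
    exact hx10
  have hy1n : y1 nc = u := by
    simp only [hy1]
    rw [if_neg (by omega : ¬ nc ≤ k), show nc - 1 = nb from by omega]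
    exact hx2n
  have hy20 : y2 0 = pe1 := by
    simp only [hy2]
    rw [if_pos (Nat.zero_le k)]
    exact hx20
  have hy2n : y2 nb = v := by
    simp only [hy2]
    rw [if_neg (by omega : ¬ nb ≤ k), show nb + 1 = nc from hnc.symm]
    exact hx1n
  have hub1 : pathSum ω y1 0 nc ≤ a := haub nc y1 hy1up hy10 hy1n
  have hub2 : pathSum ω y2 0 nb ≤ d := hdub nb y2 hy2up hy20 hy2n
  have hsum : pathSum ω y1 0 nc + pathSum ω y2 0 nb
      = pathSum ω x1 0 nc + pathSum ω x2 0 nb := by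
    simp only [pathSum]
    have d1 : ∑ j ∈ Finset.Ico 0 nc, ω (y1 j)
        = ∑ j ∈ Finset.Ico 0 (k+1), ω (y1 j) + ∑ j ∈ Finset.Ico (k+1) nc, ω (y1 j) :=
      (Finset.sum_Ico_consecutive _ (Nat.zero_le _) (by omega)).symm
    have d2 : ∑ j ∈ Finset.Ico 0 (k+1), ω (y1 j) = ∑ j ∈ Finset.Ico 0 (k+1), ω (x1 j) := by
      refine Finset.sum_congr rfl fun j hj => ?_
      have hjk : j ≤ k := by have := Finset.mem_Ico.mp hj; omega
      simp only [hy1]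
      rw [if_pos hjk]
    have d3 : ∑ j ∈ Finset.Ico (k+1) nc, ω (y1 j) = ∑ j ∈ Finset.Ico k nb, ω (x2 j) := by
      rw [Finset.sum_Ico_eq_sum_range, Finset.sum_Ico_eq_sum_range,
        show nc - (k+1) = nb - k from by omega]
      refine Finset.sum_congr rfl fun i _ => ?_
      simp only [hy1]
      rw [if_neg (by omega : ¬ k + 1 + i ≤ k), show k + 1 + i - 1 = k + i from by omega]
    have d4 : ∑ j ∈ Finset.Ico 0 nb, ω (y2 j)
        = ∑ j ∈ Finset.Ico 0 (k+1), ω (y2 j) + ∑ j ∈ Finset.Ico (k+1) nb, ω (y2 j) :=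
      (Finset.sum_Ico_consecutive _ (Nat.zero_le _) (by omega)).symm
    have d5 : ∑ j ∈ Finset.Ico 0 (k+1), ω (y2 j) = ∑ j ∈ Finset.Ico 0 (k+1), ω (x2 j) := by
      refine Finset.sum_congr rfl fun j hj => ?_
      have hjk : j ≤ k := by have := Finset.mem_Ico.mp hj; omega
      simp only [hy2]
      rw [if_pos hjk]
    have d6 : ∑ j ∈ Finset.Ico (k+1) nb, ω (y2 j) = ∑ j ∈ Finset.Ico (k+2) nc, ω (x1 j) := by
      rw [Finset.sum_Ico_eq_sum_range, Finset.sum_Ico_eq_sum_range,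
        show nb - (k+1) = nc - (k+2) from by omega]
      refine Finset.sum_congr rfl fun i _ => ?_
      simp only [hy2]
      rw [if_neg (by omega : ¬ k + 1 + i ≤ k), show k + 1 + i + 1 = k + 2 + i from by omega]
    have d7 : ∑ j ∈ Finset.Ico 0 nc, ω (x1 j)
        = ∑ j ∈ Finset.Ico 0 (k+1), ω (x1 j) + ∑ j ∈ Finset.Ico (k+1) nc, ω (x1 j) :=
      (Finset.sum_Ico_consecutive _ (Nat.zero_le _) (by omega)).symm
    have d8 : ∑ j ∈ Finset.Ico (k+1) nc, ω (x1 j)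
        = ω (x1 (k+1)) + ∑ j ∈ Finset.Ico (k+2) nc, ω (x1 j) :=
      Finset.sum_eq_sum_Ico_succ_bot (by omega) _
    have d9 : ∑ j ∈ Finset.Ico 0 nb, ω (x2 j)
        = ∑ j ∈ Finset.Ico 0 k, ω (x2 j) + ∑ j ∈ Finset.Ico k nb, ω (x2 j) :=
      (Finset.sum_Ico_consecutive _ (Nat.zero_le _) (by omega)).symm
    have d10 : ∑ j ∈ Finset.Ico 0 (k+1), ω (x2 j)
        = ∑ j ∈ Finset.Ico 0 k, ω (x2 j) + ω (x2 k) :=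
      Finset.sum_Ico_succ_top (Nat.zero_le _) _
    have hωc : ω (x2 k) = ω (x1 (k+1)) := by rw [cross]
    rw [d1, d2, d3, d4, d5, d6, d7, d8, d9, d10]
    linarith [hωc]
  have hcb : c + b = pathSum ω x1 0 nc + pathSum ω x2 0 nb := by rw [hceq, hbeq]
  linarith
end

section
/- Fix ω : Z^2 → R. Let u, v ∈ Z_+^2 with |u|_1 = |v|_1 ≥ 1 and u·e1 ≤ v·e1. Then G(0,u) − G(e2,u) ≤ G(0,v) − G(e2,v), with the convention G(e2,w) = −∞ if no up-right path from e2 to w exists. -/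
open Filter Topology MeasureTheory ProbabilityTheory

/-- One step of an up-right path. -/
lemma step_le_s4 {a b : Pt} (h : b = a + pe1 ∨ b = a + pe2) :
    a ≤ b ∧ b.1 + b.2 = a.1 + a.2 + 1 := by
  rcases h with rfl | rfl <;>
    simp [pe1, pe2, Prod.le_def, Prod.ext_iff] <;> omega

lemma upright_between {x : ℕ → Pt} {n : ℕ} (h : IsUpRight x 0 n) {j k : ℕ}
    (hjk : j ≤ k) (hkn : k ≤ n) :
    x j ≤ x k ∧ (x k).1 + (x k).2 = (x j).1 + (x j).2 + ((k - j : ℕ) : ℤ) := by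
  induction k, hjk using Nat.le_induction with
  | base => simp
  | succ k hk ih =>
    have ih' := ih (by omega)
    have hs := step_le_s4 (h k (Nat.zero_le _) (by omega))
    refine ⟨le_trans ih'.1 hs.1, ?_⟩
    have h1 := ih'.2
    have h2 := hs.2
    push_cast at *
    omega

lemma path_endpoints {x : ℕ → Pt} {n : ℕ} {u v : Pt} (h : IsUpRight x 0 n)
    (h0 : x 0 = u) (hn : x n = v) :
    u ≤ v ∧ (n : ℤ) = v.1 + v.2 - (u.1 + u.2) := by
  have := upright_between h (Nat.zero_le n) le_rfl
  rw [h0, hn] at this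
  exact ⟨this.1, by have := this.2; push_cast at this ⊢; omega⟩

/-- Existence of an up-right path between comparable points. -/
lemma exists_path (u v : Pt) (hle : u ≤ v) :
    ∃ (n : ℕ) (x : ℕ → Pt), IsUpRight x 0 n ∧ x 0 = u ∧ x n = v := by
  obtain ⟨h1, h2⟩ := hle
  refine ⟨(v.1 + v.2 - u.1 - u.2).toNat,
    fun k => (u.1 + min (k : ℤ) (v.1 - u.1), u.2 + max ((k : ℤ) - (v.1 - u.1)) 0), ?_, ?_, ?_⟩
  · intro k hk0 hk
    rcases lt_or_ge (k : ℤ) (v.1 - u.1) with hc | hc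
    · left
      simp only [Prod.ext_iff, pe1, Prod.fst_add, Prod.snd_add]
      constructor <;> push_cast <;> omega
    · right
      simp only [Prod.ext_iff, pe2, Prod.fst_add, Prod.snd_add]
      constructor <;> push_cast <;> omega
  · simp only [Prod.ext_iff]
    constructor <;> push_cast <;> omega
  · simp only [Prod.ext_iff]
    constructor <;> push_cast <;> omega

def pathSet (ω : Pt → ℝ) (u v : Pt) : Set ℝ :=
  {s : ℝ | ∃ (n : ℕ) (x : ℕ → Pt),
    IsUpRight x 0 n ∧ x 0 = u ∧ x n = v ∧ s = pathSum ω x 0 n}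

lemma pathSet_nonempty (ω : Pt → ℝ) {u v : Pt} (hle : u ≤ v) :
    (pathSet ω u v).Nonempty := by
  obtain ⟨n, x, hx, h0, hn⟩ := exists_path u v hle
  exact ⟨pathSum ω x 0 n, n, x, hx, h0, hn, rfl⟩

lemma pathSet_le (ω : Pt → ℝ) (u v : Pt) :
    ∀ s ∈ pathSet ω u v, s ≤ ∑ z ∈ Finset.Icc u v, max (ω z) 0 := by
  rintro s ⟨n, x, hx, h0, hn, rfl⟩
  have hinj : ∀ i ∈ Finset.range n, ∀ j ∈ Finset.range n, x i = x j → i = j := by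
    intro i hi j hj hij
    simp only [Finset.mem_range] at hi hj
    rcases le_total i j with hle | hle
    · have := (upright_between hx hle hj.le).2
      rw [hij] at this; omega
    · have := (upright_between hx hle hi.le).2
      rw [hij] at this; omega
  calc pathSum ω x 0 n = ∑ k ∈ Finset.range n, ω (x k) := by
        rw [pathSum, Nat.Ico_zero_eq_range]
    _ ≤ ∑ k ∈ Finset.range n, max (ω (x k)) 0 :=
        Finset.sum_le_sum fun k _ => le_max_left _ _
    _ = ∑ z ∈ Finset.image x (Finset.range n), max (ω z) 0 :=
        (Finset.sum_image (f := fun z => max (ω z) 0) hinj).symm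
    _ ≤ ∑ z ∈ Finset.Icc u v, max (ω z) 0 := by
        apply Finset.sum_le_sum_of_subset_of_nonneg
        · intro z hz
          simp only [Finset.mem_image, Finset.mem_range] at hz
          obtain ⟨k, hk, rfl⟩ := hz
          rw [Finset.mem_Icc]
          constructor
          · rw [← h0]; exact (upright_between hx (Nat.zero_le k) hk.le).1
          · rw [← hn]; exact (upright_between hx hk.le le_rfl).1
        · intro z _ _; exact le_max_right _ _

lemma pathSet_bddAbove (ω : Pt → ℝ) (u v : Pt) : BddAbove (pathSet ω u v) :=
  ⟨_, pathSet_le ω u v⟩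

lemma lppGE_eq_sSup_image (ω : Pt → ℝ) (u v : Pt) :
    lppGE ω u v = sSup ((fun r : ℝ => (r : EReal)) '' pathSet ω u v) := by
  unfold lppGE
  congr 1
  ext e
  constructor
  · rintro ⟨n, x, hx, h0, hn, rfl⟩
    exact ⟨pathSum ω x 0 n, ⟨n, x, hx, h0, hn, rfl⟩, rfl⟩
  · rintro ⟨r, ⟨n, x, hx, h0, hn, rfl⟩, rfl⟩
    exact ⟨n, x, hx, h0, hn, rfl⟩

lemma coe_csSup {S : Set ℝ} (hne : S.Nonempty) (hbdd : BddAbove S) :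
    sSup ((fun r : ℝ => (r : EReal)) '' S) = ((sSup S : ℝ) : EReal) := by
  apply le_antisymm
  · apply sSup_le
    rintro _ ⟨r, hr, rfl⟩
    exact EReal.coe_le_coe_iff.mpr (le_csSup hbdd hr)
  · obtain ⟨s0, hs0⟩ := hne
    obtain ⟨B, hB⟩ := hbdd
    set T := sSup ((fun r : ℝ => (r : EReal)) '' S) with hT
    have hTle : T ≤ (B : EReal) := by
      apply sSup_le; rintro _ ⟨r, hr, rfl⟩
      exact EReal.coe_le_coe_iff.mpr (hB hr)
    have hTge : ((s0 : ℝ) : EReal) ≤ T := le_sSup ⟨s0, hs0, rfl⟩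
    have h3 : T ≠ ⊤ := by
      intro h; rw [h] at hTle
      exact absurd hTle (by simp)
    have h4 : T ≠ ⊥ := by
      intro h; rw [h] at hTge
      exact absurd hTge (by simp)
    have ht : ((T.toReal : ℝ) : EReal) = T := EReal.coe_toReal h3 h4
    rw [← ht]
    apply EReal.coe_le_coe_iff.mpr
    apply csSup_le ⟨s0, hs0⟩
    intro s hs
    have : ((s : ℝ) : EReal) ≤ T := le_sSup ⟨s, hs, rfl⟩
    rw [← ht] at this
    exact EReal.coe_le_coe_iff.mp this

lemma lppGE_coe (ω : Pt → ℝ) {u v : Pt} (hle : u ≤ v) :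
    lppGE ω u v = ((sSup (pathSet ω u v) : ℝ) : EReal) := by
  rw [lppGE_eq_sSup_image, coe_csSup (pathSet_nonempty ω hle) (pathSet_bddAbove ω u v)]

lemma lppGE_bot (ω : Pt → ℝ) {u v : Pt} (h : ¬ u ≤ v) : lppGE ω u v = ⊥ := by
  have : {s : EReal | ∃ (n : ℕ) (x : ℕ → Pt),
      IsUpRight x 0 n ∧ x 0 = u ∧ x n = v ∧ s = ((pathSum ω x 0 n : ℝ) : EReal)} = ∅ := by
    ext e; simp only [Set.mem_setOf_eq, Set.mem_empty_iff_false, iff_false]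
    rintro ⟨n, x, hx, h0, hn, rfl⟩
    exact h (path_endpoints hx h0 hn).1
  rw [lppGE, this, sSup_empty]

/-- Concatenation of two up-right paths. -/
lemma concat_path (ω : Pt → ℝ) {x1 x2 : ℕ → Pt} {m p : ℕ}
    (h1 : IsUpRight x1 0 m) (h2 : IsUpRight x2 0 p) (hj : x1 m = x2 0) :
    ∃ y : ℕ → Pt, IsUpRight y 0 (m + p) ∧ y 0 = x1 0 ∧ y (m + p) = x2 p ∧
      pathSum ω y 0 (m + p) = pathSum ω x1 0 m + pathSum ω x2 0 p := by
  set y : ℕ → Pt := fun k => if k < m then x1 k else x2 (k - m) with hy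
  have hy1 : ∀ k ≤ m, y k = x1 k := by
    intro k hk
    rcases lt_or_eq_of_le hk with h | h
    · simp [hy, h]
    · subst h; simp [hy, hj]
  have hy2 : ∀ k, m ≤ k → y k = x2 (k - m) := by
    intro k hk; simp [hy, Nat.not_lt.mpr hk]
  refine ⟨y, ?_, ?_, ?_, ?_⟩
  · intro k _ hk
    rcases lt_or_ge k m with h | h
    · rw [hy1 k h.le, hy1 (k + 1) h]
      exact h1 k (Nat.zero_le _) h
    · rw [hy2 k h, hy2 (k + 1) (by omega)]
      have : k + 1 - m = (k - m) + 1 := by omega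
      rw [this]
      exact h2 (k - m) (Nat.zero_le _) (by omega)
  · exact hy1 0 (Nat.zero_le _)
  · have h' : m + p - m = p := by omega
    rw [hy2 _ (by omega), h']
  · rw [pathSum, ← Finset.sum_Ico_consecutive _ (Nat.zero_le m) (by omega : m ≤ m + p)]
    congr 1
    · apply Finset.sum_congr rfl
      intro k hk
      rw [hy1 k (by simp at hk; omega)]
    · rw [Finset.sum_Ico_eq_sum_range]
      rw [pathSum, Nat.Ico_zero_eq_range]
      have : m + p - m = p := by omega
      rw [this]
      apply Finset.sum_congr rfl
      intro k _
      rw [hy2 (m + k) (by omega)]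
      have h'' : m + k - m = k := by omega
      rw [h'']

/-- Restriction of an up-right path to a shorter range. -/
lemma restrict_path {x : ℕ → Pt} {n m : ℕ} (h : IsUpRight x 0 n) (hm : m ≤ n) :
    IsUpRight x 0 m := fun k hk hkm => h k hk (by omega)

/-- Shift of an up-right path. -/
lemma shift_path (ω : Pt → ℝ) {x : ℕ → Pt} {n t : ℕ} (h : IsUpRight x 0 n) (ht : t ≤ n) :
    IsUpRight (fun j => x (j + t)) 0 (n - t) ∧
      pathSum ω (fun j => x (j + t)) 0 (n - t) = pathSum ω x t n := by
  constructor
  · intro k _ hk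
    show x (k + 1 + t) = x (k + t) + pe1 ∨ x (k + 1 + t) = x (k + t) + pe2
    have he : k + 1 + t = (k + t) + 1 := by omega
    rw [he]
    exact h (k + t) (Nat.zero_le _) (by omega)
  · rw [pathSum, pathSum, Nat.Ico_zero_eq_range, Finset.sum_Ico_eq_sum_range]
    apply Finset.sum_congr rfl
    intro k _
    show ω (x (k + t)) = ω (x (t + k))
    rw [Nat.add_comm]

/-- Splitting a path sum at an intermediate index. -/
lemma pathSum_split (ω : Pt → ℝ) (x : ℕ → Pt) {t n : ℕ} (ht : t ≤ n) :
    pathSum ω x 0 n = pathSum ω x 0 t + pathSum ω x t n := by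
  rw [pathSum, pathSum, pathSum, Finset.sum_Ico_consecutive _ (Nat.zero_le t) ht]

/-- Discrete intermediate value theorem. -/
lemma discrete_ivt (f : ℕ → ℤ) (n : ℕ) (h0 : 0 ≤ f 0) (hn : f n ≤ 0)
    (hstep : ∀ k, k < n → f k - 1 ≤ f (k + 1)) :
    ∃ k, k ≤ n ∧ f k = 0 := by
  classical
  have hex : ∃ k, f k ≤ 0 ∧ k ≤ n := ⟨n, hn, le_rfl⟩
  obtain ⟨hfk0, hk0n⟩ := Nat.find_spec hex
  rcases Nat.eq_zero_or_pos (Nat.find hex) with h | h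
  · exact ⟨Nat.find hex, hk0n, by rw [h] at hfk0 ⊢; omega⟩
  · have hprev : ¬ (f (Nat.find hex - 1) ≤ 0 ∧ Nat.find hex - 1 ≤ n) :=
      Nat.find_min hex (by omega)
    have h1 : 0 < f (Nat.find hex - 1) := by
      by_contra hc
      exact hprev ⟨by omega, by omega⟩
    have h2 := hstep (Nat.find hex - 1) (by omega)
    rw [Nat.sub_add_cancel h] at h2
    exact ⟨Nat.find hex, hk0n, by omega⟩

/-- The crossing inequality: any path `0 → u` and any path `e₂ → v` cross,
so the sum of their weights is bounded by `G(0,v) + G(e₂,u)`. -/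
lemma cross_ineq (ω : Pt → ℝ) {u v : Pt} {n1 n2 : ℕ} {x1 x2 : ℕ → Pt}
    (hx1 : IsUpRight x1 0 n1) (h10 : x1 0 = 0) (h1n : x1 n1 = u)
    (hx2 : IsUpRight x2 0 n2) (h20 : x2 0 = pe2) (h2n : x2 n2 = v)
    (hd : u.1 + u.2 = v.1 + v.2) (h1 : u.1 ≤ v.1) :
    pathSum ω x1 0 n1 + pathSum ω x2 0 n2 ≤
      sSup (pathSet ω 0 v) + sSup (pathSet ω pe2 u) := by
  have e1 := (path_endpoints hx1 h10 h1n).2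
  have e2 := (path_endpoints hx2 h20 h2n).2
  simp only [Prod.fst_zero, Prod.snd_zero, pe2] at e1 e2
  -- n1 = n2 + 1
  have hn12 : n1 = n2 + 1 := by omega
  -- crossing
  set f : ℕ → ℤ := fun k => (x1 (k + 1)).1 - (x2 k).1 with hf
  have hf0 : 0 ≤ f 0 := by
    have := hx1 0 le_rfl (by omega)
    rcases this with h | h <;>
      simp only [hf, h, h10, h20, pe1, pe2, Prod.fst_add, Prod.fst_zero] <;> omega
  have hfn : f n2 ≤ 0 := by
    have : n2 + 1 = n1 := hn12.symm
    simp only [hf, this, h1n, h2n]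
    omega
  have hstep : ∀ k, k < n2 → f k - 1 ≤ f (k + 1) := by
    intro k hk
    have hs1 : (x1 (k + 1)).1 ≤ (x1 (k + 1 + 1)).1 :=
      (step_le_s4 (hx1 (k + 1) (Nat.zero_le _) (by omega))).1.1
    have hs2 : (x2 (k + 1)).1 ≤ (x2 k).1 + 1 := by
      rcases hx2 k (Nat.zero_le _) hk with h | h <;>
        simp only [h, pe1, pe2, Prod.fst_add] <;> omega
    simp only [hf]
    omega
  obtain ⟨k0, hk0n, hk0⟩ := discrete_ivt f n2 hf0 hfn hstep
  have hk1n : k0 + 1 ≤ n1 := by omega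
  -- the crossing point
  have hz : x1 (k0 + 1) = x2 k0 := by
    have l1 := (upright_between hx1 (Nat.zero_le (k0 + 1)) hk1n).2
    have l2 := (upright_between hx2 (Nat.zero_le k0) hk0n).2
    rw [h10] at l1
    rw [h20] at l2
    simp only [Prod.fst_zero, Prod.snd_zero, pe2, Nat.sub_zero] at l1 l2
    have hfk := hk0
    simp only [hf] at hfk
    ext
    · omega
    · push_cast at l1 l2
      omega
  -- assemble path from 0 to v
  obtain ⟨hB, hBsum⟩ := shift_path ω hx2 hk0n
  obtain ⟨y, hy, hy0, hyn, hys⟩ := concat_path ω (restrict_path hx1 hk1n) hB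
    (by simpa using hz)
  have hyv : y (k0 + 1 + (n2 - k0)) = v := by
    rw [hyn]
    show x2 (n2 - k0 + k0) = v
    rw [Nat.sub_add_cancel hk0n, h2n]
  have hmem1 : pathSum ω x1 0 (k0 + 1) + pathSum ω x2 k0 n2 ∈ pathSet ω 0 v := by
    refine ⟨k0 + 1 + (n2 - k0), y, hy, by rw [hy0, h10], hyv, ?_⟩
    rw [hys, hBsum]
  -- assemble path from pe2 to u
  obtain ⟨hD, hDsum⟩ := shift_path ω hx1 hk1n
  obtain ⟨y', hy', hy0', hyn', hys'⟩ := concat_path ω (restrict_path hx2 hk0n) hD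
    (by simpa using hz.symm)
  have hyu : y' (k0 + (n1 - (k0 + 1))) = u := by
    rw [hyn']
    show x1 (n1 - (k0 + 1) + (k0 + 1)) = u
    rw [Nat.sub_add_cancel hk1n, h1n]
  have hmem2 : pathSum ω x2 0 k0 + pathSum ω x1 (k0 + 1) n1 ∈ pathSet ω pe2 u := by
    refine ⟨k0 + (n1 - (k0 + 1)), y', hy', by rw [hy0', h20], hyu, ?_⟩
    rw [hys', hDsum]
  have hle1 : pathSum ω x1 0 (k0 + 1) + pathSum ω x2 k0 n2 ≤ sSup (pathSet ω 0 v) :=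
    le_csSup (pathSet_bddAbove ω 0 v) hmem1
  have hle2 : pathSum ω x2 0 k0 + pathSum ω x1 (k0 + 1) n1 ≤ sSup (pathSet ω pe2 u) :=
    le_csSup (pathSet_bddAbove ω pe2 u) hmem2
  have hsplit1 := pathSum_split ω x1 hk1n
  have hsplit2 := pathSum_split ω x2 hk0n
  linarith

/-- monotonicity of the gradient `G(0,·) - G(e₂,·)` along an antidiagonal,
with the convention `G = -∞` (in `EReal`) when no up-right path exists. -/
theorem lpp_gradient_e2_monotone (ω : Pt → ℝ) (u v : Pt)
    (hu : 0 ≤ u) (hv : 0 ≤ v)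
    (hdiag : u.1 + u.2 = v.1 + v.2) (hlen : 1 ≤ u.1 + u.2) (h1 : u.1 ≤ v.1) :
    lppGE ω 0 u - lppGE ω pe2 u ≤ lppGE ω 0 v - lppGE ω pe2 v := by
  have hu1 : (0 : ℤ) ≤ u.1 := hu.1
  have hu2 : (0 : ℤ) ≤ u.2 := hu.2
  have hv1 : (0 : ℤ) ≤ v.1 := hv.1
  have hv2 : (0 : ℤ) ≤ v.2 := hv.2
  rcases lt_or_ge v.2 1 with hc | hc
  · -- v.2 = 0 : no path from pe2 to v, RHS = ⊤
    have hnot : ¬ pe2 ≤ v := by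
      intro h
      have : (1 : ℤ) ≤ v.2 := h.2
      omega
    rw [lppGE_bot ω hnot, lppGE_coe ω hv]
    simp
  · -- all four passage times are finite reals
    have hu2' : (1 : ℤ) ≤ u.2 := by omega
    have hp2u : pe2 ≤ u := ⟨hu1, hu2'⟩
    have hp2v : pe2 ≤ v := ⟨hv1, hc⟩
    rw [lppGE_coe ω hu, lppGE_coe ω hv, lppGE_coe ω hp2u, lppGE_coe ω hp2v,
      ← EReal.coe_sub, ← EReal.coe_sub, EReal.coe_le_coe_iff]
    set a := sSup (pathSet ω 0 u)
    set b := sSup (pathSet ω pe2 u) with hb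
    set c := sSup (pathSet ω 0 v) with hcc
    set d := sSup (pathSet ω pe2 v)
    have key : ∀ s1 ∈ pathSet ω 0 u, ∀ s2 ∈ pathSet ω pe2 v, s1 + s2 ≤ c + b := by
      rintro s1 ⟨n1, x1, hx1, h10, h1n, rfl⟩ s2 ⟨n2, x2, hx2, h20, h2n, rfl⟩
      rw [hcc, hb]
      exact cross_ineq ω hx1 h10 h1n hx2 h20 h2n hdiag h1
    have h5 : a ≤ c + b - d := by
      apply csSup_le (pathSet_nonempty ω hu)
      intro s1 hs1
      have h6 : d ≤ c + b - s1 := by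
        apply csSup_le (pathSet_nonempty ω hp2v)
        intro s2 hs2
        linarith [key s1 hs1 s2 hs2]
      linarith
    linarith
end

section
/- Let B1, B2 : Z^2 × Z^2 → R be two functions, each additive (B(x,y)+B(y,z)=B(x,z)) and each recovering the same weights ω(x) = min(B_i(x,x+e1), B_i(x,x+e2)). Suppose B1(x, x+e1) ≥ B2(x, x+e1) and B1(x, x+e2) ≤ B2(x, x+e2) for all x. Let x_{0,∞} be the up-right path from a point u following minimal gradients of B1 breaking ties with e2, and y_{0,∞} the path from u following minimal gradients of B2 breaking ties with e2. Then x_n · e1 ≤ y_n · e1 for all n ≥ 0. -/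
open Filter Topology MeasureTheory ProbabilityTheory

/-- A path follows minimal gradients of `B`, breaking ties with `e₂`-steps:
step `e₁` exactly when `B(z,z+e₁) < B(z,z+e₂)`. -/
def FollowsMinGradE2 (B : Pt → Pt → ℝ) (x : ℕ → Pt) : Prop :=
  ∀ n : ℕ,
    (x (n + 1) = x n + pe1 ∧ B (x n) (x n + pe1) < B (x n) (x n + pe2)) ∨
    (x (n + 1) = x n + pe2 ∧ B (x n) (x n + pe2) ≤ B (x n) (x n + pe1))

/-- ordering of cocycle geodesics. If `B₁ ≥ B₂` in the `e₁`-gradient and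
`B₁ ≤ B₂` in the `e₂`-gradient, the minimal-gradient path of `B₁` (ties → `e₂`) stays
weakly to the left of that of `B₂`. -/
theorem cocycle_geodesics_ordered
    (B1 B2 : Pt → Pt → ℝ) (ω : Pt → ℝ) (u : Pt)
    (h1add : IsCocycle B1) (h2add : IsCocycle B2)
    (h1rec : Recovers B1 ω) (h2rec : Recovers B2 ω)
    (hmono : ∀ z : Pt, B2 z (z + pe1) ≤ B1 z (z + pe1) ∧ B1 z (z + pe2) ≤ B2 z (z + pe2))
    (x y : ℕ → Pt) (hx0 : x 0 = u) (hy0 : y 0 = u)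
    (hx : FollowsMinGradE2 B1 x) (hy : FollowsMinGradE2 B2 y) :
    ∀ n : ℕ, (x n).1 ≤ (y n).1 := by
  have key : ∀ n : ℕ, (x n).1 ≤ (y n).1 ∧ (x n).1 + (x n).2 = (y n).1 + (y n).2 := by
    intro n
    induction n with
    | zero => rw [hx0, hy0]; exact ⟨le_refl _, rfl⟩
    | succ n ih =>
      obtain ⟨hle, hsum⟩ := ih
      have hsum' : (x (n+1)).1 + (x (n+1)).2 = (y (n+1)).1 + (y (n+1)).2 := by
        rcases hx n with ⟨hxe, _⟩ | ⟨hxe, _⟩ <;> rcases hy n with ⟨hye, _⟩ | ⟨hye, _⟩ <;>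
          simp [hxe, hye, pe1, pe2, Prod.fst_add, Prod.snd_add] <;> ring_nf <;> omega
      refine ⟨?_, hsum'⟩
      rcases lt_or_eq_of_le hle with hlt | heq
      · -- strict: step changes first coordinate by at most 1 / at least 0
        have hx1 : (x (n+1)).1 ≤ (x n).1 + 1 := by
          rcases hx n with ⟨hxe, _⟩ | ⟨hxe, _⟩ <;> simp [hxe, pe1, pe2]
        have hy1 : (y n).1 ≤ (y (n+1)).1 := by
          rcases hy n with ⟨hye, _⟩ | ⟨hye, _⟩ <;> simp [hye, pe1, pe2]
        omega
      · -- equal: then x n = y n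
        have hxy : x n = y n := by
          have : (x n).2 = (y n).2 := by omega
          exact Prod.ext heq this
        set z := x n with hz
        rcases hx n with ⟨hxe, hB1⟩ | ⟨hxe, _⟩
        · -- x steps e1: show y steps e1 too
          rcases hy n with ⟨hye, _⟩ | ⟨hye, hB2⟩
          · rw [hxe, hye, ← hxy]
          · exfalso
            have hrec1 := h1rec z
            have hrec2 := h2rec z
            rw [← hxy] at hB2
            have hm := hmono z
            have h1 : ω z = B1 z (z + pe1) := by
              rw [hrec1, min_eq_left hB1.le]
            have h2 : ω z ≤ B1 z (z + pe2) := by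
              rw [hrec1]; exact min_le_right _ _
            have h3 : ω z ≤ B2 z (z + pe2) := by
              rw [hrec2]; exact min_le_right _ _
            -- B2 e2 ≤ B2 e1 ≤ B1 e1 = ω z ≤ B1 e2 ≤ B2 e2, so B1 e2 = ω z = B1 e1
            have : B1 z (z + pe2) ≤ B1 z (z + pe1) := by
              have := hm.1
              have := hm.2
              linarith
            linarith
        · -- x steps e2: fine since y's first coord doesn't decrease
          have hy1 : (y n).1 ≤ (y (n+1)).1 := by
            rcases hy n with ⟨hye, _⟩ | ⟨hye, _⟩ <;> simp [hye, pe1, pe2]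
          rw [hxe]
          simp only [pe2, Prod.fst_add]
          linarith [heq, hy1]
  exact fun n => (key n).1
end
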